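/- arXiv:2602.02837 — 9 statements merged into one kernel-verified Lean document; each statement's English description precedes it below -/
import Mathlib

section
/- A total function f : W₁ → W₂ is a morphism between neighborhood frames (W₁, ◇₁) and (W₂, ◇₂) (i.e., f⁻¹(◇₂X₂) = ◇₁f⁻¹(X₂) for all X₂ ⊆ W₂), both frames being monotone, if and only if f, viewed as a relation, satisfies both the zig condition (f[◇₁X₁] ⊆ ◇₂f[X₁] for all X₁ ⊆ W₁) and the zag condition (f⁻¹[◇₂X₂] ⊆ ◇₁f⁻¹[X₂] for all X₂ ⊆ W₂). -/
/-- A total function `f : W₁ → W₂` is a morphism between monotone neighborhood frames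
`(W₁, ◇₁)` and `(W₂, ◇₂)` iff, viewed as a relation, it satisfies both the zig and the
zag conditions.  (For the graph of a function, `Z[X] = f '' X` and `Z⁻¹[Y] = f ⁻¹' Y`.) -/
theorem morphism_iff_functional_bisimulation {W₁ W₂ : Type*}
    (d₁ : Set W₁ → Set W₁) (d₂ : Set W₂ → Set W₂)
    (h₁ : Monotone d₁) (h₂ : Monotone d₂) (f : W₁ → W₂) :
    (∀ X₂ : Set W₂, f ⁻¹' (d₂ X₂) = d₁ (f ⁻¹' X₂)) ↔
      ((∀ X₁ : Set W₁, f '' (d₁ X₁) ⊆ d₂ (f '' X₁)) ∧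
       (∀ X₂ : Set W₂, f ⁻¹' (d₂ X₂) ⊆ d₁ (f ⁻¹' X₂))) := by
  constructor
  · intro h
    refine ⟨fun X₁ => ?_, fun X₂ => (h X₂).le⟩
    rintro y ⟨x, hx, rfl⟩
    have : x ∈ d₁ (f ⁻¹' (f '' X₁)) := h₁ (Set.subset_preimage_image f X₁) hx
    rw [← h] at this
    exact this
  · rintro ⟨hzig, hzag⟩ X₂
    refine Set.Subset.antisymm (hzag X₂) fun x hx => ?_
    have := hzig (f ⁻¹' X₂) ⟨x, hx, rfl⟩
    exact h₂ (Set.image_preimage_subset f X₂) this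
end

section
/- Let Z be a τ-bisimulation between monotone neighborhood models M₁ = (W₁, ◇₁, ϑ₁) and M₂ = (W₂, ◇₂, ϑ₂), where τ is a set of literals. Then for every modal formula φ all of whose literals lie in τ, Z preserves φ: if (w₁, w₂) ∈ Z and M₁, w₁ ⊨ φ then M₂, w₂ ⊨ φ. -/
/-- Modal formulas in negation normal form. -/
inductive Fm where
  | var : ℕ → Fm
  | nvar : ℕ → Fm
  | bot : Fm
  | top : Fm
  | and : Fm → Fm → Fm
  | or : Fm → Fm → Fm
  | dia : Fm → Fm
  | box : Fm → Fm

/-- Neighborhood semantics: the extension of a formula. -/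
def nval {W : Type*} (d : Set W → Set W) (v : ℕ → Set W) : Fm → Set W
  | .var n => v n
  | .nvar n => (v n)ᶜ
  | .bot => ∅
  | .top => Set.univ
  | .and a b => nval d v a ∩ nval d v b
  | .or a b => nval d v a ∪ nval d v b
  | .dia a => d (nval d v a)
  | .box a => (d ((nval d v a)ᶜ))ᶜ

/-- Literals of a formula: `(n, true)` for `p_n`, `(n, false)` for `¬ p_n`. -/
def lits : Fm → Set (ℕ × Bool)
  | .var n => {(n, true)}
  | .nvar n => {(n, false)}
  | .bot => ∅
  | .top => ∅
  | .and a b => lits a ∪ lits b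
  | .or a b => lits a ∪ lits b
  | .dia a => lits a
  | .box a => lits a

/-- Extension of a literal under a valuation. -/
def litval {W : Type*} (v : ℕ → Set W) (l : ℕ × Bool) : Set W :=
  if l.2 then v l.1 else (v l.1)ᶜ

/-- Full image of a set under a relation. -/
def rimg {α β : Type*} (Z : Set (α × β)) (X : Set α) : Set β :=
  {b | ∃ a ∈ X, (a, b) ∈ Z}

/-- Inverse relation. -/
def rinv {α β : Type*} (Z : Set (α × β)) : Set (β × α) :=
  {p | (p.2, p.1) ∈ Z}

/-! The image of the extension of `φ` under `Z` lies in the extension of `φ`, by induction on `φ`.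
At `◇` this is zig followed by monotonicity of `◇₂`. The `□` case is the dual: `Z[A] ⊆ B` holds iff
`Z⁻¹[-B] ⊆ -A`, which turns `□` into the `◇` case for `Z⁻¹`, where zag plays the role of zig. -/

section

variable {α β : Type*} {Z : Set (α × β)} {A : Set α} {B : Set β}

theorem rimg_eq_image (Z : Set (α × β)) (A : Set α) : rimg Z A = SetRel.image Z A := rfl

theorem rimg_subset_iff_rimg_rinv_compl : rimg Z A ⊆ B ↔ rimg (rinv Z) Bᶜ ⊆ Aᶜ :=
  ⟨fun h _ ⟨_, hb, hab⟩ ha => hb (h ⟨_, ha, hab⟩),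
    fun h b ⟨_, ha, hab⟩ => by_contra fun hb => h ⟨b, hb, hab⟩ ha⟩

variable {dα : Set α → Set α} {dβ : Set β → Set β}

theorem rimg_dia_subset (hβ : Monotone dβ) (zig : ∀ X, rimg Z (dα X) ⊆ dβ (rimg Z X))
    (h : rimg Z A ⊆ B) : rimg Z (dα A) ⊆ dβ B :=
  (zig A).trans (hβ h)

theorem rimg_box_subset (hα : Monotone dα)
    (zag : ∀ X, rimg (rinv Z) (dβ X) ⊆ dα (rimg (rinv Z) X))
    (h : rimg Z A ⊆ B) : rimg Z (dα Aᶜ)ᶜ ⊆ (dβ Bᶜ)ᶜ := by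
  rw [rimg_subset_iff_rimg_rinv_compl, compl_compl, compl_compl]
  exact rimg_dia_subset hα zag (rimg_subset_iff_rimg_rinv_compl.1 h)

end

theorem rimg_nval_subset {W₁ W₂ : Type*} {d₁ : Set W₁ → Set W₁} {d₂ : Set W₂ → Set W₂}
    {ϑ₁ : ℕ → Set W₁} {ϑ₂ : ℕ → Set W₂} {τ : Set (ℕ × Bool)} {Z : Set (W₁ × W₂)}
    (h₁ : Monotone d₁) (h₂ : Monotone d₂)
    (zig : ∀ X : Set W₁, rimg Z (d₁ X) ⊆ d₂ (rimg Z X))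
    (zag : ∀ X : Set W₂, rimg (rinv Z) (d₂ X) ⊆ d₁ (rimg (rinv Z) X))
    (hlit : ∀ l ∈ τ, rimg Z (litval ϑ₁ l) ⊆ litval ϑ₂ l)
    (φ : Fm) (hφ : lits φ ⊆ τ) : rimg Z (nval d₁ ϑ₁ φ) ⊆ nval d₂ ϑ₂ φ := by
  induction φ with
  | var _ | nvar _ => exact hlit _ (hφ rfl)
  | bot => simp [rimg_eq_image, nval]
  | top => exact Set.subset_univ _
  | and a b iha ihb =>
    exact (SetRel.image_inter_subset Z).trans <| Set.inter_subset_inter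
      (iha (Set.subset_union_left.trans hφ)) (ihb (Set.subset_union_right.trans hφ))
  | or a b iha ihb =>
    rw [nval, rimg_eq_image, SetRel.image_union]
    exact Set.union_subset_union
      (iha (Set.subset_union_left.trans hφ)) (ihb (Set.subset_union_right.trans hφ))
  | dia a ih => exact rimg_dia_subset h₂ zig (ih hφ)
  | box a ih => exact rimg_box_subset h₁ zag (ih hφ)

/-- A τ-bisimulation between monotone neighborhood models preserves every formula
all of whose literals lie in τ. -/
theorem tau_bisimulation_preserves {W₁ W₂ : Type*}
    (d₁ : Set W₁ → Set W₁) (d₂ : Set W₂ → Set W₂)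
    (h₁ : Monotone d₁) (h₂ : Monotone d₂)
    (ϑ₁ : ℕ → Set W₁) (ϑ₂ : ℕ → Set W₂)
    (τ : Set (ℕ × Bool)) (Z : Set (W₁ × W₂))
    (zig : ∀ X : Set W₁, rimg Z (d₁ X) ⊆ d₂ (rimg Z X))
    (zag : ∀ X : Set W₂, rimg (rinv Z) (d₂ X) ⊆ d₁ (rimg (rinv Z) X))
    (hlit : ∀ l ∈ τ, rimg Z (litval ϑ₁ l) ⊆ litval ϑ₂ l)
    (φ : Fm) (hφ : lits φ ⊆ τ) :
    ∀ w₁ w₂, (w₁, w₂) ∈ Z → w₁ ∈ nval d₁ ϑ₁ φ → w₂ ∈ nval d₂ ϑ₂ φ :=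
  fun w₁ _ hZ hw => rimg_nval_subset h₁ h₂ zig zag hlit φ hφ ⟨w₁, hw, hZ⟩
end

section
/- The formula φ(p, r, s) := (◇(¬s ∧ ¬r ∧ ◇(¬s ∧ r ∧ ¬p)) ∧ □(¬s ∧ r → □(¬s ∧ ¬r → □(¬s ∧ r → p)))) ∨ □(¬s ∧ r → p) is p-monotone on every transitive weakly connected Kripke frame: for any such frame (W, R), any world w, and any two valuations ϑ₁ ≤_p ϑ₂ (meaning ϑ₁(p) ⊆ ϑ₂(p) and ϑ₁(q) = ϑ₂(q) for q ≠ p), if φ is true at w under ϑ₁ then φ is true at w under ϑ₂. -/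
/-- Truth of the formula
`φ(p,r,s) := (◇(¬s ∧ ¬r ∧ ◇(¬s ∧ r ∧ ¬p)) ∧ □(¬s ∧ r → □(¬s ∧ ¬r → □(¬s ∧ r → p)))) ∨ □(¬s ∧ r → p)`
at a world `w`, with valuations `P`, `Rv`, `S` of the variables `p`, `r`, `s`. -/
def phiTrue {W : Type*} (R : W → W → Prop) (P Rv S : Set W) (w : W) : Prop :=
  ((∃ v, R w v ∧ v ∉ S ∧ v ∉ Rv ∧ ∃ u, R v u ∧ u ∉ S ∧ u ∈ Rv ∧ u ∉ P) ∧
   (∀ v, R w v → v ∉ S → v ∈ Rv →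
      ∀ u, R v u → u ∉ S → u ∉ Rv →
        ∀ t, R u t → t ∉ S → t ∈ Rv → t ∈ P)) ∨
  (∀ v, R w v → v ∉ S → v ∈ Rv → v ∈ P)

/-- `φ(p,r,s)` is `p`-monotone on every transitive weakly connected Kripke frame. -/
theorem phi_p_monotone_K43 {W : Type*} (R : W → W → Prop)
    (htrans : Transitive R)
    (hwconn : ∀ w u v, R w u → R w v → u = v ∨ R u v ∨ R v u)
    (P₁ P₂ Rv S : Set W) (hP : P₁ ⊆ P₂) (w : W)
    (h : phiTrue R P₁ Rv S w) : phiTrue R P₂ Rv S w := by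
  rcases h with ⟨⟨v, hwv, hvS, hvR, u, hvu, huS, huR, huP⟩, B₁⟩ | hbox
  · -- Box part is monotone
    have B₂ : ∀ v, R w v → v ∉ S → v ∈ Rv →
        ∀ u, R v u → u ∉ S → u ∉ Rv →
          ∀ t, R u t → t ∉ S → t ∈ Rv → t ∈ P₂ :=
      fun v hv hvS hvR u hu huS huR t ht htS htR =>
        hP (B₁ v hv hvS hvR u hu huS huR t ht htS htR)
    by_cases hdia : ∃ v', R w v' ∧ v' ∉ S ∧ v' ∉ Rv ∧
        ∃ u', R v' u' ∧ u' ∉ S ∧ u' ∈ Rv ∧ u' ∉ P₂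
    · exact Or.inl ⟨hdia, B₂⟩
    · -- no diamond witness for P₂: prove the second disjunct
      push_neg at hdia
      right
      intro t hwt htS htR
      rcases hwconn w t v hwt hwv with rfl | htv | hvt
      · exact absurd htR hvR
      · -- R t v : chain t R v R u forces u ∈ P₁, contradiction
        exact absurd (B₁ t hwt htS htR v htv hvS hvR u hvu huS huR) huP
      · -- R v t : t is a diamond candidate, so t ∈ P₂ by hdia
        exact hdia v hwv hvS hvR t hvt htS htR
  · exact Or.inr fun v hv hvS hvR => hP (hbox v hv hvS hvR)
end

section
/- Let k ≥ 2 and let C_k be the Kripke frame on {0,…,k−1} with the total accessibility relation (every world sees every world). The formula φ := □p ∨ (¬p ∧ ◇(p ∧ α₁) ∧ … ∧ ◇(p ∧ α_{k−1})), where α₁,…,α_{k−1} are pairwise inconsistent conjunctions of literals over parameters r₀,…,r_{m−1} with k − 1 ≤ 2^m, is p-monotone on C_k: for valuations ϑ₁ ≤_p ϑ₂ (ϑ₁(p) ⊆ ϑ₂(p), other variables equal), truth of φ at a world under ϑ₁ implies truth under ϑ₂. -/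
/-- Kripke semantics for formulas in negation normal form. -/
def ksatN {W : Type*} (R : W → W → Prop) (ϑ : ℕ → Set W) : Fm → W → Prop
  | .var n, w => w ∈ ϑ n
  | .nvar n, w => w ∉ ϑ n
  | .bot, _ => False
  | .top, _ => True
  | .and a b, w => ksatN R ϑ a w ∧ ksatN R ϑ b w
  | .or a b, w => ksatN R ϑ a w ∨ ksatN R ϑ b w
  | .dia a, w => ∃ v, R w v ∧ ksatN R ϑ a v
  | .box a, w => ∀ v, R w v → ksatN R ϑ a v

/-- The literal `rⱼ` or `¬rⱼ`: variable `0` is `p`, variable `j+1` is `rⱼ`. -/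
def litOf (j : ℕ) (b : Bool) : Fm := if b then .var (j + 1) else .nvar (j + 1)

/-- The conjunction `l₀ ∧ … ∧ l_{m-1}` of literals over `r₀,…,r_{m-1}` given by the
sign function `ε`. -/
def conjOf (m : ℕ) (ε : Fin m → Bool) : Fm :=
  (List.ofFn fun j : Fin m => litOf j (ε j)).foldr .and .top

/-- The formula `□p ∨ (¬p ∧ ◇(p ∧ α₁) ∧ … ∧ ◇(p ∧ α_{k-1}))`, where the `αᵢ` are the
distinct conjunctions of literals given by `ε`. -/
def phiC (k m : ℕ) (ε : Fin (k - 1) → Fin m → Bool) : Fm :=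
  .or (.box (.var 0))
    (.and (.nvar 0)
      ((List.ofFn fun i : Fin (k - 1) =>
        Fm.dia (.and (.var 0) (conjOf m (ε i)))).foldr .and .top))

lemma foldr_and_iff {W : Type*} (R : W → W → Prop) (ϑ : ℕ → Set W) (L : List Fm) (w : W) :
    ksatN R ϑ (L.foldr .and .top) w ↔ ∀ f ∈ L, ksatN R ϑ f w := by
  induction L with
  | nil => simp [ksatN]
  | cons a t ih => simp [ksatN, ih]

lemma conjOf_iff {W : Type*} (R : W → W → Prop) (ϑ : ℕ → Set W) (m : ℕ)
    (ε : Fin m → Bool) (w : W) :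
    ksatN R ϑ (conjOf m ε) w ↔ ∀ j : Fin m, (w ∈ ϑ (j + 1) ↔ ε j = true) := by
  rw [conjOf, foldr_and_iff]
  simp only [List.mem_ofFn, Set.mem_range]
  constructor
  · intro h j
    have := h (litOf j (ε j)) ⟨j, rfl⟩
    unfold litOf at this
    cases hb : ε j <;> simp [hb, ksatN] at this ⊢ <;> tauto
  · rintro h f ⟨j, rfl⟩
    have := h j
    unfold litOf
    cases hb : ε j <;> simp [hb, ksatN] at this ⊢ <;> tauto

/-- The formula `□p ∨ (¬p ∧ ⋀ᵢ ◇(p ∧ αᵢ))` with pairwise distinct conjunctions of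
literals `αᵢ` over parameters `r₀,…,r_{m-1}` is `p`-monotone on the cluster `C_k`. -/
theorem phiC_p_monotone_on_cluster (k m : ℕ) (hk : 2 ≤ k)
    (ε : Fin (k - 1) → Fin m → Bool) (hε : Function.Injective ε)
    (ϑ₁ ϑ₂ : ℕ → Set (Fin k)) (hp : ϑ₁ 0 ⊆ ϑ₂ 0) (ho : ∀ n, n ≠ 0 → ϑ₁ n = ϑ₂ n)
    (w : Fin k)
    (h : ksatN (fun _ _ => True) ϑ₁ (phiC k m ε) w) :
    ksatN (fun _ _ => True) ϑ₂ (phiC k m ε) w := by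
  have hconj_eq : ∀ (δ : Fin m → Bool) (v : Fin k),
      ksatN (fun _ _ => True) ϑ₁ (conjOf m δ) v ↔
      ksatN (fun _ _ => True) ϑ₂ (conjOf m δ) v := by
    intro δ v
    rw [conjOf_iff, conjOf_iff]
    constructor <;> intro hj j <;>
      [rw [← ho (j + 1) (by omega)]; rw [ho (j + 1) (by omega)]] <;> exact hj j
  rcases h with hbox | ⟨hnp, hdia⟩
  · -- □p case
    left
    intro v _
    exact hp (hbox v trivial)
  · -- second disjunct under ϑ₁
    rw [foldr_and_iff] at hdia
    simp only [List.mem_ofFn, Set.mem_range] at hdia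
    have hdia' : ∀ i : Fin (k - 1), ∃ v : Fin k, v ∈ ϑ₁ 0 ∧
        ksatN (fun _ _ => True) ϑ₁ (conjOf m (ε i)) v := by
      intro i
      obtain ⟨v, _, hv1, hv2⟩ := hdia _ ⟨i, rfl⟩
      exact ⟨v, hv1, hv2⟩
    by_cases hw : w ∈ ϑ₂ 0
    · -- show □p under ϑ₂
      left
      choose v hv1 hv2 using hdia'
      have hvinj : Function.Injective v := by
        intro i i' he
        apply hε
        have h1 := (conjOf_iff _ ϑ₁ m (ε i) (v i)).1 (hv2 i)
        have h2 := (conjOf_iff _ ϑ₁ m (ε i') (v i')).1 (hv2 i')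
        funext j
        rw [← he] at h2
        have := (h1 j).symm.trans (h2 j)
        cases hb : ε i j <;> cases hb' : ε i' j <;> simp [hb, hb'] at this ⊢
      have hvne : ∀ i, v i ≠ w := by
        intro i he
        exact hnp (he ▸ hv1 i)
      -- f : Fin (k-1) → {x // x ≠ w} is injective hence surjective
      let f : Fin (k - 1) → {x : Fin k // x ≠ w} := fun i => ⟨v i, hvne i⟩
      have hfinj : Function.Injective f := by
        intro i i' he
        exact hvinj (congrArg Subtype.val he)
      have hcard : Fintype.card {x : Fin k // x ≠ w} = k - 1 := by
        have : Fintype.card {x : Fin k // ¬ x = w} =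
            Fintype.card (Fin k) - Fintype.card {x : Fin k // x = w} :=
          Fintype.card_subtype_compl _
        simpa [Fintype.card_subtype_eq] using this
      have hfsurj : Function.Surjective f := by
        have : Function.Bijective f := (Fintype.bijective_iff_injective_and_card f).2
          ⟨hfinj, by simp [hcard]⟩
        exact this.2
      intro u _
      by_cases hu : u = w
      · exact hu ▸ hw
      · obtain ⟨i, hi⟩ := hfsurj ⟨u, hu⟩
        have : v i = u := congrArg Subtype.val hi
        exact hp (this ▸ hv1 i)
    · -- second disjunct under ϑ₂
      right
      refine ⟨hw, ?_⟩
      rw [foldr_and_iff]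
      simp only [List.mem_ofFn, Set.mem_range]
      rintro f ⟨i, rfl⟩
      obtain ⟨v, hv1, hv2⟩ := hdia' i
      exact ⟨v, trivial, hp hv1, (hconj_eq (ε i) v).1 hv2⟩
end

section
/- Let Z ⊆ W₁ × W₂ be a full relation between finite sets W₁ and W₂ (i.e., every element of W₁ is related to some element of W₂ and every element of W₂ is related to some element of W₁). Then there exists a full relation Z₀ ⊆ Z which is zigzag-free: Z₀ = Z₁ ∪ Z₂ where Z₁ is (the graph of) a partial function, Z₂⁻¹ is (the graph of) a partial function, dom(Z₁) ∩ dom(Z₂) = ∅, and rng(Z₁) ∩ rng(Z₂) = ∅. -/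
/-- Domain of a relation. -/
def rdom {α β : Type*} (Z : Set (α × β)) : Set α := {a | ∃ b, (a, b) ∈ Z}

/-- Range of a relation. -/
def rrng {α β : Type*} (Z : Set (α × β)) : Set β := {b | ∃ a, (a, b) ∈ Z}

/-!
Take a full subrelation `Z₀ ⊆ Z` that is minimal among full subrelations (it exists by
finiteness). If some pair `(a, b) ∈ Z₀` had both `a` and `b` related to other elements, removing
it would keep `Z₀` full; so every pair has an endpoint of degree one, i.e. the bipartite graph of
`Z₀` is a disjoint union of stars. Let `Z₁` consist of the pairs whose left endpoint has degree one
and `Z₂` of the others, whose right endpoint then has degree one.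
-/

open Set

section

variable {α β : Type*}

def IsFullRel (Z : Set (α × β)) : Prop := rdom Z = univ ∧ rrng Z = univ

/-- The bipartite graph of `Z` has no path with three edges, i.e. it is a disjoint union of stars. -/
def IsStarForest (Z : Set (α × β)) : Prop :=
  ∀ a b, (a, b) ∈ Z → (∀ b', (a, b') ∈ Z → b' = b) ∨ (∀ a', (a', b) ∈ Z → a' = a)

def IsZigzagFree (Z : Set (α × β)) : Prop :=
  ∃ Z₁ Z₂ : Set (α × β), Z = Z₁ ∪ Z₂ ∧
    (∀ a b b', (a, b) ∈ Z₁ → (a, b') ∈ Z₁ → b = b') ∧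
    (∀ a a' b, (a, b) ∈ Z₂ → (a', b) ∈ Z₂ → a = a') ∧
    rdom Z₁ ∩ rdom Z₂ = ∅ ∧ rrng Z₁ ∩ rrng Z₂ = ∅

lemma rdom_diff_singleton {Z : Set (α × β)} {a : α} {b b' : β} (hb' : (a, b') ∈ Z)
    (hne : b' ≠ b) : rdom (Z \ {(a, b)}) = rdom Z := by
  refine Subset.antisymm (fun x ⟨y, hxy⟩ ↦ ⟨y, hxy.1⟩) fun x ⟨y, hxy⟩ ↦ ?_
  by_cases hx : x = a
  · subst hx
    exact ⟨b', hb', by simpa using hne⟩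
  · exact ⟨y, hxy, by simp [hx]⟩

lemma rrng_diff_singleton {Z : Set (α × β)} {a a' : α} {b : β} (ha' : (a', b) ∈ Z)
    (hne : a' ≠ a) : rrng (Z \ {(a, b)}) = rrng Z := by
  refine Subset.antisymm (fun y ⟨x, hxy⟩ ↦ ⟨x, hxy.1⟩) fun y ⟨x, hxy⟩ ↦ ?_
  by_cases hy : y = b
  · subst hy
    exact ⟨a', ha', by simpa using hne⟩
  · exact ⟨x, hxy, by simp [hy]⟩

lemma IsFullRel.diff_singleton {Z : Set (α × β)} (hZ : IsFullRel Z) {a a' : α} {b b' : β}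
    (hb' : (a, b') ∈ Z) (hb : b' ≠ b) (ha' : (a', b) ∈ Z) (ha : a' ≠ a) :
    IsFullRel (Z \ {(a, b)}) :=
  ⟨(rdom_diff_singleton hb' hb).trans hZ.1, (rrng_diff_singleton ha' ha).trans hZ.2⟩

lemma isStarForest_of_minimal_isFullRel {Z : Set (α × β)} (hZ : Minimal IsFullRel Z) :
    IsStarForest Z := by
  intro a b hab
  by_contra! h
  obtain ⟨⟨b', hb', hb⟩, ⟨a', ha', ha⟩⟩ := h
  have hsub : Z ⊆ Z \ {(a, b)} := hZ.2 (hZ.1.diff_singleton hb' hb ha' ha) sdiff_subset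
  exact (hsub hab).2 rfl

lemma IsStarForest.isZigzagFree {Z : Set (α × β)} (hZ : IsStarForest Z) : IsZigzagFree Z := by
  set Z₁ := {p ∈ Z | ∀ b, (p.1, b) ∈ Z → b = p.2}
  have right_unique {a b} (hab : (a, b) ∈ Z \ Z₁) : ∀ a', (a', b) ∈ Z → a' = a :=
    (hZ a b hab.1).resolve_left fun h ↦ hab.2 ⟨hab.1, h⟩
  refine ⟨Z₁, Z \ Z₁, (union_sdiff_cancel (sep_subset _ _)).symm, ?_, ?_, ?_, ?_⟩
  · exact fun a b b' hab hab' ↦ (hab.2 b' hab'.1).symm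
  · exact fun a a' b hab ha'b ↦ (right_unique hab a' ha'b.1).symm
  · refine eq_empty_iff_forall_notMem.2 fun a ⟨⟨b, hab⟩, ⟨b', hab'⟩⟩ ↦ hab'.2 ?_
    rwa [hab.2 b' hab'.1]
  · refine eq_empty_iff_forall_notMem.2 fun b ⟨⟨a, hab⟩, ⟨a', ha'b⟩⟩ ↦ ha'b.2 ?_
    rwa [right_unique ha'b a hab.1] at hab

lemma exists_minimal_isFullRel_subset [Finite α] [Finite β] {Z : Set (α × β)}
    (hZ : IsFullRel Z) : ∃ Z₀ ⊆ Z, Minimal IsFullRel Z₀ :=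
  exists_minimal_le_of_wellFoundedLT IsFullRel Z hZ

end

/-- Every full relation between finite sets contains a zigzag-free full subrelation:
`Z₀ = Z₁ ∪ Z₂` where `Z₁` and `Z₂⁻¹` are partial functions with
`dom Z₁ ∩ dom Z₂ = ∅` and `rng Z₁ ∩ rng Z₂ = ∅`. -/
theorem exists_zigzagFree_full_subrelation {W₁ W₂ : Type*} [Finite W₁] [Finite W₂]
    (Z : Set (W₁ × W₂))
    (hdom : rdom Z = Set.univ) (hrng : rrng Z = Set.univ) :
    ∃ Z₀ Z₁ Z₂ : Set (W₁ × W₂),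
      Z₀ ⊆ Z ∧ rdom Z₀ = Set.univ ∧ rrng Z₀ = Set.univ ∧
      Z₀ = Z₁ ∪ Z₂ ∧
      (∀ a b b', (a, b) ∈ Z₁ → (a, b') ∈ Z₁ → b = b') ∧
      (∀ a a' b, (a, b) ∈ Z₂ → (a', b) ∈ Z₂ → a = a') ∧
      rdom Z₁ ∩ rdom Z₂ = ∅ ∧ rrng Z₁ ∩ rrng Z₂ = ∅ := by
  obtain ⟨Z₀, hZ₀Z, hmin⟩ := exists_minimal_isFullRel_subset (Z := Z) ⟨hdom, hrng⟩
  obtain ⟨Z₁, Z₂, hZ₀⟩ := (isStarForest_of_minimal_isFullRel hmin).isZigzagFree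
  exact ⟨Z₀, Z₁, Z₂, hZ₀Z, hmin.prop.1, hmin.prop.2, hZ₀⟩
end

section
/- Let Z ⊆ W₁ × W₂ be a full bisimulation between monotone neighborhood frames (W₁, ◇₁) and (W₂, ◇₂), and let π₁, π₂ : Z → Wₖ be the projections. Define ◇_max X := π₁⁻¹[◇₁ π₁[X]] ∩ π₂⁻¹[◇₂ π₂[X]] for X ⊆ Z. Then ◇_max satisfies ◇_max(πₖ⁻¹[Xₖ]) = πₖ⁻¹[◇ₖ Xₖ] for k = 1, 2 and all Xₖ ⊆ Wₖ, and ◇_max is the greatest monotone operator on 𝒫(Z) with this property. -/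
/-- First projection from (the type of elements of) `Z`. -/
def pr1 {W₁ W₂ : Type*} (Z : Set (W₁ × W₂)) : ↥Z → W₁ := fun z => z.val.1

/-- Second projection. -/
def pr2 {W₁ W₂ : Type*} (Z : Set (W₁ × W₂)) : ↥Z → W₂ := fun z => z.val.2

/-- The maximal bisimulation-product operator:
`◇_max X := π₁⁻¹[◇₁ π₁[X]] ∩ π₂⁻¹[◇₂ π₂[X]]`. -/
def dmax {W₁ W₂ : Type*} (d₁ : Set W₁ → Set W₁) (d₂ : Set W₂ → Set W₂)
    (Z : Set (W₁ × W₂)) (X : Set ↥Z) : Set ↥Z :=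
  pr1 Z ⁻¹' (d₁ (pr1 Z '' X)) ∩ pr2 Z ⁻¹' (d₂ (pr2 Z '' X))

lemma img1 {W₁ W₂ : Type*} (Z : Set (W₁ × W₂)) (hfull₁ : ∀ w₁, ∃ w₂, (w₁, w₂) ∈ Z)
    (X₁ : Set W₁) : pr1 Z '' (pr1 Z ⁻¹' X₁) = X₁ := by
  ext a
  constructor
  · rintro ⟨z, hz, rfl⟩; exact hz
  · intro ha
    obtain ⟨b, hb⟩ := hfull₁ a
    exact ⟨⟨(a, b), hb⟩, ha, rfl⟩

lemma img2 {W₁ W₂ : Type*} (Z : Set (W₁ × W₂)) (hfull₂ : ∀ w₂, ∃ w₁, (w₁, w₂) ∈ Z)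
    (X₂ : Set W₂) : pr2 Z '' (pr2 Z ⁻¹' X₂) = X₂ := by
  ext b
  constructor
  · rintro ⟨z, hz, rfl⟩; exact hz
  · intro hb
    obtain ⟨a, ha⟩ := hfull₂ b
    exact ⟨⟨(a, b), ha⟩, hb, rfl⟩

lemma img12 {W₁ W₂ : Type*} (Z : Set (W₁ × W₂)) (X₁ : Set W₁) :
    pr2 Z '' (pr1 Z ⁻¹' X₁) = rimg Z X₁ := by
  ext b
  constructor
  · rintro ⟨⟨⟨a, b'⟩, hz⟩, hx, rfl⟩; exact ⟨a, hx, hz⟩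
  · rintro ⟨a, hx, hz⟩; exact ⟨⟨(a, b), hz⟩, hx, rfl⟩

lemma img21 {W₁ W₂ : Type*} (Z : Set (W₁ × W₂)) (X₂ : Set W₂) :
    pr1 Z '' (pr2 Z ⁻¹' X₂) = rimg (rinv Z) X₂ := by
  ext a
  constructor
  · rintro ⟨⟨⟨a', b⟩, hz⟩, hx, rfl⟩; exact ⟨b, hx, hz⟩
  · rintro ⟨b, hx, hz⟩; exact ⟨⟨(a, b), hz⟩, hx, rfl⟩

/-- For a full bisimulation `Z` between monotone neighborhood frames, `◇_max` satisfies
`◇_max(πₖ⁻¹[Xₖ]) = πₖ⁻¹[◇ₖ Xₖ]` for `k = 1, 2`, and is the greatest monotone operator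
on `𝒫(Z)` with this property. -/
theorem dmax_greatest {W₁ W₂ : Type*}
    (d₁ : Set W₁ → Set W₁) (d₂ : Set W₂ → Set W₂)
    (h₁ : Monotone d₁) (h₂ : Monotone d₂)
    (Z : Set (W₁ × W₂))
    (hfull₁ : ∀ w₁, ∃ w₂, (w₁, w₂) ∈ Z) (hfull₂ : ∀ w₂, ∃ w₁, (w₁, w₂) ∈ Z)
    (zig : ∀ X : Set W₁, rimg Z (d₁ X) ⊆ d₂ (rimg Z X))
    (zag : ∀ X : Set W₂, rimg (rinv Z) (d₂ X) ⊆ d₁ (rimg (rinv Z) X)) :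
    (∀ X₁ : Set W₁, dmax d₁ d₂ Z (pr1 Z ⁻¹' X₁) = pr1 Z ⁻¹' (d₁ X₁)) ∧
    (∀ X₂ : Set W₂, dmax d₁ d₂ Z (pr2 Z ⁻¹' X₂) = pr2 Z ⁻¹' (d₂ X₂)) ∧
    (∀ D : Set ↥Z → Set ↥Z, Monotone D →
      (∀ X₁ : Set W₁, D (pr1 Z ⁻¹' X₁) = pr1 Z ⁻¹' (d₁ X₁)) →
      (∀ X₂ : Set W₂, D (pr2 Z ⁻¹' X₂) = pr2 Z ⁻¹' (d₂ X₂)) →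
      ∀ X : Set ↥Z, D X ⊆ dmax d₁ d₂ Z X) := by
  refine ⟨?_, ?_, ?_⟩
  · intro X₁
    unfold dmax
    rw [img1 Z hfull₁, img12]
    apply Set.inter_eq_left.mpr
    rintro ⟨⟨a, b⟩, hz⟩ ha
    exact zig X₁ ⟨a, ha, hz⟩
  · intro X₂
    unfold dmax
    rw [img2 Z hfull₂, img21]
    apply Set.inter_eq_right.mpr
    rintro ⟨⟨a, b⟩, hz⟩ hb
    exact zag X₂ ⟨b, hb, hz⟩
  · intro D hD hD1 hD2 X z hz
    have t1 : D X ⊆ D (pr1 Z ⁻¹' (pr1 Z '' X)) := hD (Set.subset_preimage_image _ _)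
    have t2 : D X ⊆ D (pr2 Z ⁻¹' (pr2 Z '' X)) := hD (Set.subset_preimage_image _ _)
    rw [hD1] at t1
    rw [hD2] at t2
    exact ⟨t1 hz, t2 hz⟩
end

section
/- Let (Z, ◇_max) be the maximal bisimulation product of monotone neighborhood frames (W₁, ◇₁) and (W₂, ◇₂) along a full bisimulation Z, with projections π₁, π₂, and let α(p) be a positive modal formula in one variable. Then for every X ⊆ Z, the interpretation of α at X in (Z, ◇_max) is contained in π₁⁻¹[α_{F₁}(π₁[X])] ∩ π₂⁻¹[α_{F₂}(π₂[X])], where α_{Fₖ} denotes the unary set operator induced by α on the frame (Wₖ, ◇ₖ). -/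
/-- Positive modal formulas in one variable `p`. -/
inductive PFm where
  | pr : PFm
  | bot : PFm
  | top : PFm
  | and : PFm → PFm → PFm
  | or : PFm → PFm → PFm
  | dia : PFm → PFm
  | box : PFm → PFm

/-- The unary set operator induced by a positive formula on a neighborhood frame. -/
def opF {W : Type*} (d : Set W → Set W) : PFm → Set W → Set W
  | .pr, X => X
  | .bot, _ => ∅
  | .top, _ => Set.univ
  | .and a b, X => opF d a X ∩ opF d b X
  | .or a b, X => opF d a X ∪ opF d b X
  | .dia a, X => d (opF d a X)
  | .box a, X => (d ((opF d a X)ᶜ))ᶜ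

/-- On the maximal bisimulation product of monotone neighborhood frames along a full
bisimulation `Z`, the interpretation of a positive formula `α` at `X ⊆ Z` is contained
in `π₁⁻¹[α_{F₁}(π₁[X])] ∩ π₂⁻¹[α_{F₂}(π₂[X])]`. -/
theorem positive_op_on_max_product {W₁ W₂ : Type*}
    (d₁ : Set W₁ → Set W₁) (d₂ : Set W₂ → Set W₂)
    (h₁ : Monotone d₁) (h₂ : Monotone d₂)
    (Z : Set (W₁ × W₂))
    (hfull₁ : ∀ w₁, ∃ w₂, (w₁, w₂) ∈ Z) (hfull₂ : ∀ w₂, ∃ w₁, (w₁, w₂) ∈ Z)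
    (zig : ∀ X : Set W₁, rimg Z (d₁ X) ⊆ d₂ (rimg Z X))
    (zag : ∀ X : Set W₂, rimg (rinv Z) (d₂ X) ⊆ d₁ (rimg (rinv Z) X))
    (α : PFm) (X : Set ↥Z) :
    opF (dmax d₁ d₂ Z) α X ⊆
      pr1 Z ⁻¹' (opF d₁ α (pr1 Z '' X)) ∩ pr2 Z ⁻¹' (opF d₂ α (pr2 Z '' X)) := by
  induction α with
  | pr => intro z hz; exact ⟨⟨z, hz, rfl⟩, ⟨z, hz, rfl⟩⟩
  | bot => intro z hz; exact hz.elim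
  | top => intro z _; exact ⟨trivial, trivial⟩
  | and a b iha ihb =>
    intro z hz
    obtain ⟨ha1, ha2⟩ := iha hz.1
    obtain ⟨hb1, hb2⟩ := ihb hz.2
    exact ⟨⟨ha1, hb1⟩, ⟨ha2, hb2⟩⟩
  | or a b iha ihb =>
    intro z hz
    cases hz with
    | inl h => exact ⟨Or.inl (iha h).1, Or.inl (iha h).2⟩
    | inr h => exact ⟨Or.inr (ihb h).1, Or.inr (ihb h).2⟩
  | dia a ih =>
    intro z hz
    have g1 : pr1 Z '' opF (dmax d₁ d₂ Z) a X ⊆ opF d₁ a (pr1 Z '' X) := by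
      rintro _ ⟨w, hw, rfl⟩; exact (ih hw).1
    have g2 : pr2 Z '' opF (dmax d₁ d₂ Z) a X ⊆ opF d₂ a (pr2 Z '' X) := by
      rintro _ ⟨w, hw, rfl⟩; exact (ih hw).2
    exact ⟨h₁ g1 hz.1, h₂ g2 hz.2⟩
  | box a ih =>
    intro z hz
    set C : Set ↥Z := (opF (dmax d₁ d₂ Z) a X)ᶜ with hC
    have key1 : (opF d₁ a (pr1 Z '' X))ᶜ ⊆ pr1 Z '' C := by
      intro w hw
      obtain ⟨b, hb⟩ := hfull₁ w
      exact ⟨⟨(w, b), hb⟩, fun hmem => hw (ih hmem).1, rfl⟩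
    have key2 : (opF d₂ a (pr2 Z '' X))ᶜ ⊆ pr2 Z '' C := by
      intro w hw
      obtain ⟨b, hb⟩ := hfull₂ w
      exact ⟨⟨(b, w), hb⟩, fun hmem => hw (ih hmem).2, rfl⟩
    have cross1 : rimg (rinv Z) ((opF d₂ a (pr2 Z '' X))ᶜ) ⊆ pr1 Z '' C := by
      rintro w ⟨b, hb, hzb⟩
      exact ⟨⟨(w, b), hzb⟩, fun hmem => hb (ih hmem).2, rfl⟩
    have cross2 : rimg Z ((opF d₁ a (pr1 Z '' X))ᶜ) ⊆ pr2 Z '' C := by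
      rintro w ⟨b, hb, hzb⟩
      exact ⟨⟨(b, w), hzb⟩, fun hmem => hb (ih hmem).1, rfl⟩
    constructor
    · intro hmem
      apply hz
      refine ⟨h₁ key1 hmem, ?_⟩
      have hm : pr2 Z z ∈ rimg Z (d₁ ((opF d₁ a (pr1 Z '' X))ᶜ)) := ⟨pr1 Z z, hmem, z.2⟩
      exact h₂ cross2 (zig _ hm)
    · intro hmem
      apply hz
      refine ⟨?_, h₂ key2 hmem⟩
      have hm : pr1 Z z ∈ rimg (rinv Z) (d₂ ((opF d₂ a (pr2 Z '' X))ᶜ)) := ⟨pr2 Z z, hmem, z.2⟩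
      exact h₁ cross1 (zag _ hm)
end

section
/- Let α(p) be a positive modal formula in one variable, and suppose the axiom α(p) → ◇p is valid in two monotone neighborhood frames (W₁, ◇₁) and (W₂, ◇₂), i.e., α_{Fₖ}(X) ⊆ ◇ₖX for all X ⊆ Wₖ, k = 1,2. Then for any full bisimulation Z between these frames, the maximal bisimulation product (Z, ◇_max) also validates α(p) → ◇p: α_F(X) ⊆ ◇_max X for all X ⊆ Z. -/
/-- Key lemma: the operator on the product is dominated (through the projections)
by the operators on the components. -/
lemma key_proj {W₁ W₂ : Type*}
    (d₁ : Set W₁ → Set W₁) (d₂ : Set W₂ → Set W₂)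
    (h₁ : Monotone d₁) (h₂ : Monotone d₂)
    (Z : Set (W₁ × W₂))
    (hfull₁ : ∀ w₁, ∃ w₂, (w₁, w₂) ∈ Z) (hfull₂ : ∀ w₂, ∃ w₁, (w₁, w₂) ∈ Z)
    (zig : ∀ X : Set W₁, rimg Z (d₁ X) ⊆ d₂ (rimg Z X))
    (zag : ∀ X : Set W₂, rimg (rinv Z) (d₂ X) ⊆ d₁ (rimg (rinv Z) X))
    (α : PFm) :
    ∀ X : Set ↥Z, opF (dmax d₁ d₂ Z) α X ⊆
      pr1 Z ⁻¹' (opF d₁ α (pr1 Z '' X)) ∩ pr2 Z ⁻¹' (opF d₂ α (pr2 Z '' X)) := by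
  induction α with
  | pr => exact fun X z hz => ⟨⟨z, hz, rfl⟩, ⟨z, hz, rfl⟩⟩
  | bot => exact fun X z hz => hz.elim
  | top => exact fun X z _ => ⟨trivial, trivial⟩
  | and a b iha ihb =>
      exact fun X z hz =>
        ⟨⟨(iha X hz.1).1, (ihb X hz.2).1⟩, ⟨(iha X hz.1).2, (ihb X hz.2).2⟩⟩
  | or a b iha ihb =>
      intro X z hz
      rcases hz with h | h
      · exact ⟨Or.inl (iha X h).1, Or.inl (iha X h).2⟩
      · exact ⟨Or.inr (ihb X h).1, Or.inr (ihb X h).2⟩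
  | dia a ih =>
      intro X z hz
      obtain ⟨hz1, hz2⟩ := hz
      have s1 : pr1 Z '' opF (dmax d₁ d₂ Z) a X ⊆ opF d₁ a (pr1 Z '' X) := by
        rintro w ⟨z', hz', rfl⟩; exact (ih X hz').1
      have s2 : pr2 Z '' opF (dmax d₁ d₂ Z) a X ⊆ opF d₂ a (pr2 Z '' X) := by
        rintro w ⟨z', hz', rfl⟩; exact (ih X hz').2
      exact ⟨h₁ s1 hz1, h₂ s2 hz2⟩
  | box a ih =>
      intro X z hz
      set Y := opF (dmax d₁ d₂ Z) a X with hY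
      set A₁ := opF d₁ a (pr1 Z '' X) with hA₁
      set A₂ := opF d₂ a (pr2 Z '' X) with hA₂
      -- hz : z ∉ dmax d₁ d₂ Z Yᶜ
      have hYA₁ : ∀ z' : ↥Z, z' ∈ Y → z'.val.1 ∈ A₁ := fun z' h => (ih X h).1
      have hYA₂ : ∀ z' : ↥Z, z' ∈ Y → z'.val.2 ∈ A₂ := fun z' h => (ih X h).2
      have s1 : A₁ᶜ ⊆ pr1 Z '' Yᶜ := by
        intro w₁ hw
        obtain ⟨w₂, hw₂⟩ := hfull₁ w₁
        exact ⟨⟨(w₁, w₂), hw₂⟩, fun hmem => hw (hYA₁ _ hmem), rfl⟩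
      have s2 : rimg Z A₁ᶜ ⊆ pr2 Z '' Yᶜ := by
        rintro w₂ ⟨w₁, hw₁, hZ⟩
        exact ⟨⟨(w₁, w₂), hZ⟩, fun hmem => hw₁ (hYA₁ _ hmem), rfl⟩
      have t2 : A₂ᶜ ⊆ pr2 Z '' Yᶜ := by
        intro w₂ hw
        obtain ⟨w₁, hw₁⟩ := hfull₂ w₂
        exact ⟨⟨(w₁, w₂), hw₁⟩, fun hmem => hw (hYA₂ _ hmem), rfl⟩
      have t1 : rimg (rinv Z) A₂ᶜ ⊆ pr1 Z '' Yᶜ := by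
        rintro w₁ ⟨w₂, hw₂, hZ⟩
        exact ⟨⟨(w₁, w₂), hZ⟩, fun hmem => hw₂ (hYA₂ _ hmem), rfl⟩
      have hzZ : (z.val.1, z.val.2) ∈ Z := z.prop
      constructor
      · -- z.val.1 ∉ d₁ A₁ᶜ
        intro hd
        apply hz
        refine ⟨h₁ s1 hd, h₂ s2 (zig _ ⟨z.val.1, hd, hzZ⟩)⟩
      · intro hd
        apply hz
        refine ⟨h₁ t1 (zag _ ⟨z.val.2, hd, hzZ⟩), h₂ t2 hd⟩

/-- If the axiom `α(p) → ◇p` is valid in two monotone neighborhood frames, then it is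
valid in their maximal bisimulation product along any full bisimulation. -/
theorem axiom_preserved_by_max_product {W₁ W₂ : Type*}
    (d₁ : Set W₁ → Set W₁) (d₂ : Set W₂ → Set W₂)
    (h₁ : Monotone d₁) (h₂ : Monotone d₂)
    (Z : Set (W₁ × W₂))
    (hfull₁ : ∀ w₁, ∃ w₂, (w₁, w₂) ∈ Z) (hfull₂ : ∀ w₂, ∃ w₁, (w₁, w₂) ∈ Z)
    (zig : ∀ X : Set W₁, rimg Z (d₁ X) ⊆ d₂ (rimg Z X))
    (zag : ∀ X : Set W₂, rimg (rinv Z) (d₂ X) ⊆ d₁ (rimg (rinv Z) X))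
    (α : PFm)
    (hv₁ : ∀ X : Set W₁, opF d₁ α X ⊆ d₁ X)
    (hv₂ : ∀ X : Set W₂, opF d₂ α X ⊆ d₂ X) :
    ∀ X : Set ↥Z, opF (dmax d₁ d₂ Z) α X ⊆ dmax d₁ d₂ Z X := by
  intro X z hz
  have h := key_proj d₁ d₂ h₁ h₂ Z hfull₁ hfull₂ zig zag α X hz
  exact ⟨hv₁ _ h.1, hv₂ _ h.2⟩
end

section
/- Let M₁ = (W₁, ◇₁, ϑ₁) and M₂ = (W₂, ◇₂, ϑ₂) be monotone neighborhood models, and suppose Z = Z₁ ∪ Z₂ is a zigzag-free P-directed bisimulation between them, where Z₁ and Z₂⁻¹ are partial functions with dom(Z₁) ∩ dom(Z₂) = ∅ and rng(Z₁) ∩ rng(Z₂) = ∅. Define ϑ₁′(q) := Z₁⁻¹[ϑ₂(q)] ∪ (ϑ₁(q) \ dom(Z₁)) and ϑ₂′(q) := Z₂[ϑ₁(q)] ∪ (ϑ₂(q) \ rng(Z₂)) for all variables q. Then: (a) ϑ₁ ≤_P ϑ₁′ and ϑ₂′ ≤_P ϑ₂ (valuations agree outside P and increase on P); and (b) Z is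 a full bisimulation between (W₁, ◇₁, ϑ₁′) and (W₂, ◇₂, ϑ₂′) respecting all literals, i.e., for every variable q and (w₁, w₂) ∈ Z, w₁ ∈ ϑ₁′(q) ⟺ w₂ ∈ ϑ₂′(q). -/
/-- From a zigzag-free `P`-directed bisimulation `Z = Z₁ ∪ Z₂` between monotone
neighborhood models one can modify the valuations to
`ϑ₁′(q) := Z₁⁻¹[ϑ₂(q)] ∪ (ϑ₁(q) \ dom Z₁)` and `ϑ₂′(q) := Z₂[ϑ₁(q)] ∪ (ϑ₂(q) \ rng Z₂)`
so that (a) `ϑ₁ ≤_P ϑ₁′` and `ϑ₂′ ≤_P ϑ₂`, and (b) `Z` is a bisimulation between the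
modified models respecting all literals. -/
theorem zigzagFree_valuation_modification {W₁ W₂ : Type*}
    (d₁ : Set W₁ → Set W₁) (d₂ : Set W₂ → Set W₂)
    (h₁ : Monotone d₁) (h₂ : Monotone d₂)
    (ϑ₁ : ℕ → Set W₁) (ϑ₂ : ℕ → Set W₂) (P : Set ℕ)
    (Z Z₁ Z₂ : Set (W₁ × W₂)) (hZ : Z = Z₁ ∪ Z₂)
    (hfun₁ : ∀ a b b', (a, b) ∈ Z₁ → (a, b') ∈ Z₁ → b = b')
    (hfun₂ : ∀ a a' b, (a, b) ∈ Z₂ → (a', b) ∈ Z₂ → a = a')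
    (hdomdisj : rdom Z₁ ∩ rdom Z₂ = ∅) (hrngdisj : rrng Z₁ ∩ rrng Z₂ = ∅)
    (zig : ∀ X : Set W₁, rimg Z (d₁ X) ⊆ d₂ (rimg Z X))
    (zag : ∀ X : Set W₂, rimg (rinv Z) (d₂ X) ⊆ d₁ (rimg (rinv Z) X))
    (hlitpos : ∀ q : ℕ, rimg Z (ϑ₁ q) ⊆ ϑ₂ q)
    (hlitneg : ∀ q ∉ P, rimg (rinv Z) (ϑ₂ q) ⊆ ϑ₁ q) :
    let ϑ₁' : ℕ → Set W₁ := fun q => rimg (rinv Z₁) (ϑ₂ q) ∪ (ϑ₁ q \ rdom Z₁)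
    let ϑ₂' : ℕ → Set W₂ := fun q => rimg Z₂ (ϑ₁ q) ∪ (ϑ₂ q \ rrng Z₂)
    ((∀ p ∈ P, ϑ₁ p ⊆ ϑ₁' p) ∧ (∀ q ∉ P, ϑ₁' q = ϑ₁ q) ∧
     (∀ p ∈ P, ϑ₂' p ⊆ ϑ₂ p) ∧ (∀ q ∉ P, ϑ₂' q = ϑ₂ q)) ∧
    ((∀ X : Set W₁, rimg Z (d₁ X) ⊆ d₂ (rimg Z X)) ∧
     (∀ X : Set W₂, rimg (rinv Z) (d₂ X) ⊆ d₁ (rimg (rinv Z) X)) ∧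
     (∀ (q : ℕ) (w₁ : W₁) (w₂ : W₂), (w₁, w₂) ∈ Z → (w₁ ∈ ϑ₁' q ↔ w₂ ∈ ϑ₂' q))) := by
  intro ϑ₁' ϑ₂'
  have hZ₁ : Z₁ ⊆ Z := hZ ▸ Set.subset_union_left
  have hZ₂ : Z₂ ⊆ Z := hZ ▸ Set.subset_union_right
  have hdd : ∀ a, a ∈ rdom Z₁ → a ∈ rdom Z₂ → False := by
    intro a h1 h2
    have : a ∈ rdom Z₁ ∩ rdom Z₂ := ⟨h1, h2⟩
    simp [hdomdisj] at this
  have hrr : ∀ b, b ∈ rrng Z₁ → b ∈ rrng Z₂ → False := by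
    intro b h1 h2
    have : b ∈ rrng Z₁ ∩ rrng Z₂ := ⟨h1, h2⟩
    simp [hrngdisj] at this
  have hup₁ : ∀ q, ϑ₁ q ⊆ ϑ₁' q := by
    intro q w hw
    by_cases hd : w ∈ rdom Z₁
    · obtain ⟨b, hb⟩ := hd
      exact Or.inl ⟨b, hlitpos q ⟨w, hw, hZ₁ hb⟩, hb⟩
    · exact Or.inr ⟨hw, hd⟩
  have hdown₂ : ∀ q, ϑ₂' q ⊆ ϑ₂ q := by
    intro q w hw
    rcases hw with ⟨a, ha, hab⟩ | ⟨h, _⟩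
    · exact hlitpos q ⟨a, ha, hZ₂ hab⟩
    · exact h
  refine ⟨⟨fun p _ => hup₁ p, ?_, fun p _ => hdown₂ p, ?_⟩, zig, zag, ?_⟩
  · intro q hq
    apply Set.Subset.antisymm _ (hup₁ q)
    intro w hw
    rcases hw with ⟨b, hb, hba⟩ | ⟨h, _⟩
    · have hm : (w, b) ∈ Z₁ := hba
      exact hlitneg q hq ⟨b, hb, show (w, b) ∈ Z from hZ₁ hm⟩
    · exact h
  · intro q hq
    apply Set.Subset.antisymm (hdown₂ q)
    intro b hb
    by_cases hr : b ∈ rrng Z₂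
    · obtain ⟨a, ha⟩ := hr
      exact Or.inl ⟨a, hlitneg q hq ⟨b, hb, hZ₂ ha⟩, ha⟩
    · exact Or.inr ⟨hb, hr⟩
  · intro q w₁ w₂ hw
    rw [hZ] at hw
    rcases hw with h1 | h2
    · constructor
      · rintro (⟨b, hb, hba⟩ | ⟨_, hd⟩)
        · have heq : b = w₂ := hfun₁ w₁ b w₂ hba h1
          exact Or.inr ⟨heq ▸ hb, fun hr => hrr w₂ ⟨w₁, h1⟩ hr⟩
        · exact absurd ⟨w₂, h1⟩ hd
      · rintro (⟨a, _, hab⟩ | ⟨hb, _⟩)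
        · exact absurd ⟨a, hab⟩ (fun hr => hrr w₂ ⟨w₁, h1⟩ hr)
        · exact Or.inl ⟨w₂, hb, h1⟩
    · constructor
      · rintro (⟨b, _, hba⟩ | ⟨ha, _⟩)
        · exact absurd ⟨b, hba⟩ (fun hd => hdd w₁ hd ⟨w₂, h2⟩)
        · exact Or.inl ⟨w₁, ha, h2⟩
      · rintro (⟨a, ha, hab⟩ | ⟨_, hr⟩)
        · have heq : a = w₁ := hfun₂ a w₁ w₂ hab h2
          exact Or.inr ⟨heq ▸ ha, fun hd => hdd w₁ hd ⟨w₂, h2⟩⟩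
        · exact absurd ⟨w₁, h2⟩ hr
end
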